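/- arXiv:2212.11706 — 3 statements merged into one kernel-verified Lean document; each statement's English description precedes it below -/
import Mathlib

section
/- Lebesgue-type inequality for regression: let P_A ⊆ Ω be unisolvent nodes for Π_A with Lebesgue constant Λ(P_A), P ⊆ Ω a finite data set, R_{A,P} the full-rank regression matrix, S_{A,P} a left inverse (S_{A,P} R_{A,P} = Id), Q_{f,P,A} ∈ Π_A any polynomial with regression error μ = max_{p∈P} |Q_{f,P,A}(p) − f(p)|, and Q_{f,A} the interpolant of f in P_A. Then ‖f − Q_{f,P,A}‖_{C⁰(Ω)} ≤ (1 + Λ(P_A)‖S_{A,P}‖_∞)‖f − Q_{f,A}‖_{C⁰(Ω)} + μ Λ(P_A)‖S_{A,P}‖_∞. -/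
open Matrix

/-- Lebesgue-type inequality for regression:
‖f − Q_{f,P,A}‖ ≤ (1 + Λ(P_A)‖S‖_∞)‖f − Q_{f,A}‖ + μ Λ(P_A)‖S‖_∞. -/
theorem stmt_10 (m : ℕ) (A P : Type) [Fintype A] [Fintype P] [DecidableEq A]
    (Ω : Set (Fin m → ℝ)) (hΩ : Ω = Set.Icc (-1 : Fin m → ℝ) 1)
    [CompactSpace Ω]
    -- the polynomial space Π_A, realised as a subspace of C(Ω,ℝ)
    (PiA : Submodule ℝ C(Ω, ℝ))
    -- unisolvent interpolation nodes and Lagrange basis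
    (node : A → Ω) (L : A → C(Ω, ℝ))
    (hLmem : ∀ a, L a ∈ PiA)
    (hKron : ∀ a b : A, L a (node b) = if a = b then 1 else 0)
    -- interpolation fixes the polynomials of Π_A
    (hproj : ∀ g ∈ PiA, (∑ a : A, g (node a) • L a) = g)
    -- data points, regression matrix and a left inverse S
    (pt : P → Ω)
    (R : Matrix P A ℝ) (hR : ∀ i a, R i a = L a (pt i))
    (S : Matrix A P ℝ) (hS : S * R = 1)
    -- Lebesgue constant and matrix ∞-norm (max absolute row sum)
    (Λ Snorm : ℝ)
    (hΛ : Λ = ‖∑ a : A, |L a|‖)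
    (hSnorm : Snorm = ⨆ a : A, ∑ i : P, |S a i|)
    -- the target function, its interpolant, and an arbitrary regressor in Π_A
    (f : C(Ω, ℝ))
    (Qint : C(Ω, ℝ)) (hQint : Qint = ∑ a : A, f (node a) • L a)
    (Qreg : C(Ω, ℝ)) (hQreg : Qreg ∈ PiA)
    -- regression error
    (μ : ℝ) (hμ : μ = ⨆ i : P, |Qreg (pt i) - f (pt i)|) :
    ‖f - Qreg‖ ≤ (1 + Λ * Snorm) * ‖f - Qint‖ + μ * (Λ * Snorm) := by
  have hΛ0 : 0 ≤ Λ := hΛ ▸ norm_nonneg _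
  have hS0 : 0 ≤ Snorm := hSnorm ▸ Real.iSup_nonneg
    (fun a => Finset.sum_nonneg fun i _ => abs_nonneg _)
  have hμ0 : 0 ≤ μ := hμ ▸ Real.iSup_nonneg fun i => abs_nonneg _
  set g : C(Ω, ℝ) := Qreg - Qint with hg
  have hQintmem : Qint ∈ PiA := hQint ▸ Submodule.sum_mem _
    (fun a _ => Submodule.smul_mem _ _ (hLmem a))
  have hgmem : g ∈ PiA := Submodule.sub_mem _ hQreg hQintmem
  -- value of a Π_A element at pt i via its Lagrange coefficients
  have hval : ∀ i : P, g (pt i) = ∑ b : A, R i b * g (node b) := by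
    intro i
    conv_lhs => rw [← hproj g hgmem]
    simp [hR, mul_comm]
  -- recover the coefficients with S
  have hcoef : ∀ a : A, g (node a) = ∑ i : P, S a i * g (pt i) := by
    intro a
    have h1 : ∑ i : P, S a i * g (pt i)
        = ∑ b : A, (∑ i : P, S a i * R i b) * g (node b) := by
      simp only [hval, Finset.mul_sum, Finset.sum_mul]
      rw [Finset.sum_comm]
      congr 1; ext i; congr 1; ext b; ring
    have h2 : ∀ b : A, ∑ i : P, S a i * R i b = (1 : Matrix A A ℝ) a b := by
      intro b; rw [← hS]; rfl
    simp only [h1, h2, Matrix.one_apply]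
    simp
  -- pointwise bound at the data points
  have hpt : ∀ i : P, |g (pt i)| ≤ ‖f - Qint‖ + μ := by
    intro i
    have h1 : |Qreg (pt i) - f (pt i)| ≤ μ := by
      rw [hμ]
      exact le_ciSup (f := fun i : P => |Qreg (pt i) - f (pt i)|) (Set.Finite.bddAbove (Set.finite_range _)) i
    have h2 : |f (pt i) - Qint (pt i)| ≤ ‖f - Qint‖ := by
      calc |f (pt i) - Qint (pt i)| = |(f - Qint) (pt i)| := by simp
        _ ≤ ‖f - Qint‖ := (f - Qint).norm_coe_le_norm _
    have : g (pt i) = (Qreg (pt i) - f (pt i)) + (f (pt i) - Qint (pt i)) := by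
      simp [hg]
    rw [this]
    calc |(Qreg (pt i) - f (pt i)) + (f (pt i) - Qint (pt i))|
        ≤ |Qreg (pt i) - f (pt i)| + |f (pt i) - Qint (pt i)| := abs_add_le _ _
      _ ≤ μ + ‖f - Qint‖ := add_le_add h1 h2
      _ = ‖f - Qint‖ + μ := by ring
  -- coefficient bound
  have hcb : ∀ a : A, |g (node a)| ≤ Snorm * (‖f - Qint‖ + μ) := by
    intro a
    have hrow : ∑ i : P, |S a i| ≤ Snorm := by
      rw [hSnorm]
      exact le_ciSup (f := fun a : A => ∑ i : P, |S a i|) (Set.Finite.bddAbove (Set.finite_range _)) a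
    calc |g (node a)| = |∑ i : P, S a i * g (pt i)| := by rw [hcoef a]
      _ ≤ ∑ i : P, |S a i * g (pt i)| := Finset.abs_sum_le_sum_abs _ _
      _ ≤ ∑ i : P, |S a i| * (‖f - Qint‖ + μ) := by
          apply Finset.sum_le_sum
          intro i _
          rw [abs_mul]
          exact mul_le_mul_of_nonneg_left (hpt i) (abs_nonneg _)
      _ = (∑ i : P, |S a i|) * (‖f - Qint‖ + μ) := by rw [Finset.sum_mul]
      _ ≤ Snorm * (‖f - Qint‖ + μ) := by
          apply mul_le_mul_of_nonneg_right hrow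
          positivity
  -- sup-norm bound on g
  have hgnorm : ‖g‖ ≤ Λ * (Snorm * (‖f - Qint‖ + μ)) := by
    apply ContinuousMap.norm_le _ (by positivity) |>.mpr
    intro x
    have hx : g x = ∑ a : A, g (node a) * L a x := by
      conv_lhs => rw [← hproj g hgmem]
      simp
    rw [Real.norm_eq_abs, hx]
    calc |∑ a : A, g (node a) * L a x|
        ≤ ∑ a : A, |g (node a)| * |L a x| := by
          refine (Finset.abs_sum_le_sum_abs _ _).trans ?_
          apply le_of_eq; congr 1; ext a; rw [abs_mul]
      _ ≤ ∑ a : A, (Snorm * (‖f - Qint‖ + μ)) * |L a x| := by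
          apply Finset.sum_le_sum
          intro a _
          exact mul_le_mul_of_nonneg_right (hcb a) (abs_nonneg _)
      _ = (Snorm * (‖f - Qint‖ + μ)) * ∑ a : A, |L a x| := by rw [Finset.mul_sum]
      _ ≤ (Snorm * (‖f - Qint‖ + μ)) * Λ := by
          apply mul_le_mul_of_nonneg_left _ (by positivity)
          have : ∑ a : A, |L a x| = (∑ a : A, |L a|) x := by simp
          rw [this, hΛ]
          calc ((∑ a : A, |L a|) x : ℝ) ≤ |(∑ a : A, |L a|) x| := le_abs_self _
            _ ≤ ‖∑ a : A, |L a|‖ := (∑ a : A, |L a|).norm_coe_le_norm _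
      _ = Λ * (Snorm * (‖f - Qint‖ + μ)) := by ring
  have htri : ‖f - Qreg‖ ≤ ‖f - Qint‖ + ‖g‖ := by
    have : f - Qreg = (f - Qint) - g := by simp [hg]
    rw [this]
    exact norm_sub_le _ _
  nlinarith [htri, hgnorm]
end

section
/- Uniform convergence of regressors: under the hypotheses of the Lebesgue-type inequality, suppose (P_n)_n are data sets, interpolation errors satisfy ‖f − Q_{f,A_n}‖_{C⁰(Ω)} = o(1/(1 + Λ(P_{A_n})‖S_{A_n,P_n}‖_∞)) and regression errors satisfy μ_n = o(1/(Λ(P_{A_n})‖S_{A_n,P_n}‖_∞)) as n → ∞. Then the regressors Q_{f,P_n,A_n} converge uniformly to f on Ω. -/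
open Matrix Filter

/-- uniform convergence of regressors: under the hypotheses of the
Lebesgue-type inequality, if ‖f − Q_{f,A_n}‖ = o(1/(1 + Λ_n‖S_n‖_∞)) and
μ_n = o(1/(Λ_n‖S_n‖_∞)), then Q_{f,P_n,A_n} → f uniformly on Ω. -/
theorem stmt_11 (m : ℕ) (A P : ℕ → Type)
    [∀ n, Fintype (A n)] [∀ n, Fintype (P n)] [∀ n, DecidableEq (A n)]
    (Ω : Set (Fin m → ℝ)) (hΩ : Ω = Set.Icc (-1 : Fin m → ℝ) 1)
    [CompactSpace Ω]
    (PiA : ∀ n, Submodule ℝ C(Ω, ℝ))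
    (node : ∀ n, A n → Ω) (L : ∀ n, A n → C(Ω, ℝ))
    (hLmem : ∀ n a, L n a ∈ PiA n)
    (hKron : ∀ n (a b : A n), L n a (node n b) = if a = b then 1 else 0)
    (hproj : ∀ n, ∀ g ∈ PiA n, (∑ a : A n, g (node n a) • L n a) = g)
    (pt : ∀ n, P n → Ω)
    (R : ∀ n, Matrix (P n) (A n) ℝ) (hR : ∀ n i a, R n i a = L n a (pt n i))
    (S : ∀ n, Matrix (A n) (P n) ℝ) (hS : ∀ n, S n * R n = 1)
    (Λ Snorm : ℕ → ℝ)
    (hΛ : ∀ n, Λ n = ‖∑ a : A n, |L n a|‖)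
    (hSnorm : ∀ n, Snorm n = ⨆ a : A n, ∑ i : P n, |S n a i|)
    (f : C(Ω, ℝ))
    (Qint : ℕ → C(Ω, ℝ)) (hQint : ∀ n, Qint n = ∑ a : A n, f (node n a) • L n a)
    (Qreg : ℕ → C(Ω, ℝ)) (hQreg : ∀ n, Qreg n ∈ PiA n)
    (μ : ℕ → ℝ) (hμ : ∀ n, μ n = ⨆ i : P n, |Qreg n (pt n i) - f (pt n i)|)
    -- the little-o conditions
    (hint : Tendsto (fun n => ‖f - Qint n‖ * (1 + Λ n * Snorm n)) atTop (nhds 0))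
    (hreg : Tendsto (fun n => μ n * (Λ n * Snorm n)) atTop (nhds 0)) :
    Tendsto (fun n => ‖f - Qreg n‖) atTop (nhds 0) := by
  -- basic nonnegativity
  have hΛ0 : ∀ n, 0 ≤ Λ n := fun n => (hΛ n) ▸ norm_nonneg _
  have hS0 : ∀ n, 0 ≤ Snorm n := fun n => (hSnorm n) ▸
    Real.iSup_nonneg (fun a => Finset.sum_nonneg fun i _ => abs_nonneg _)
  have hμ0 : ∀ n, 0 ≤ μ n := fun n => (hμ n) ▸ Real.iSup_nonneg (fun i => abs_nonneg _)
  -- node values of elements of PiA via the left inverse S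
  have nodeval : ∀ n (g : C(Ω, ℝ)), g ∈ PiA n → ∀ a : A n,
      g (node n a) = ∑ i : P n, S n a i * g (pt n i) := by
    intro n g hg a
    have hgp := hproj n g hg
    have hval : ∀ i : P n, g (pt n i) = ∑ b : A n, g (node n b) * R n i b := by
      intro i
      conv_lhs => rw [← hgp]
      simp [ContinuousMap.sum_apply, hR, smul_eq_mul]
    calc g (node n a) = ∑ b : A n, (S n * R n) a b * g (node n b) := by
          rw [hS]; simp [Matrix.one_apply]
      _ = ∑ b : A n, (∑ i : P n, S n a i * R n i b) * g (node n b) := by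
          simp [Matrix.mul_apply]
      _ = ∑ b : A n, ∑ i : P n, S n a i * (g (node n b) * R n i b) := by
          refine Finset.sum_congr rfl fun b _ => ?_
          rw [Finset.sum_mul]
          exact Finset.sum_congr rfl fun i _ => by ring
      _ = ∑ i : P n, ∑ b : A n, S n a i * (g (node n b) * R n i b) := Finset.sum_comm
      _ = ∑ i : P n, S n a i * g (pt n i) := by
          refine Finset.sum_congr rfl fun i _ => ?_
          rw [hval i, Finset.mul_sum]
  -- Qint is in PiA and interpolates f at the nodes
  have hQintmem : ∀ n, Qint n ∈ PiA n := by
    intro n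
    rw [hQint n]
    exact Submodule.sum_mem _ fun a _ => Submodule.smul_mem _ _ (hLmem n a)
  have hQintnode : ∀ n (a : A n), Qint n (node n a) = f (node n a) := by
    intro n a
    rw [hQint n]
    simp [ContinuousMap.sum_apply, hKron, smul_eq_mul]
  -- the key Lebesgue-type bound
  have hbound : ∀ n, ‖f - Qreg n‖ ≤
      ‖f - Qint n‖ * (1 + Λ n * Snorm n) + μ n * (Λ n * Snorm n) := by
    intro n
    set D : ℝ := μ n + ‖f - Qint n‖ with hD
    have hD0 : 0 ≤ D := add_nonneg (hμ0 n) (norm_nonneg _)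
    -- coefficient bound
    have hcoef : ∀ a : A n, |Qreg n (node n a) - f (node n a)| ≤ Snorm n * D := by
      intro a
      have h1 : Qreg n (node n a) - f (node n a)
          = ∑ i : P n, S n a i * (Qreg n (pt n i) - Qint n (pt n i)) := by
        rw [nodeval n _ (hQreg n) a, ← hQintnode n a,
          nodeval n _ (hQintmem n) a, ← Finset.sum_sub_distrib]
        exact Finset.sum_congr rfl fun i _ => by ring
      rw [h1]
      calc |∑ i : P n, S n a i * (Qreg n (pt n i) - Qint n (pt n i))|
          ≤ ∑ i : P n, |S n a i * (Qreg n (pt n i) - Qint n (pt n i))| :=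
            Finset.abs_sum_le_sum_abs _ _
        _ ≤ ∑ i : P n, |S n a i| * D := by
            refine Finset.sum_le_sum fun i _ => ?_
            rw [abs_mul]
            refine mul_le_mul_of_nonneg_left ?_ (abs_nonneg _)
            have h2 : |Qreg n (pt n i) - f (pt n i)| ≤ μ n := by
              rw [hμ n]
              exact le_ciSup (f := fun i : P n => |Qreg n (pt n i) - f (pt n i)|)
                (Set.Finite.bddAbove (Set.finite_range _)) i
            have h3 : |f (pt n i) - Qint n (pt n i)| ≤ ‖f - Qint n‖ := by
              have := (f - Qint n).norm_coe_le_norm (pt n i)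
              simpa [Real.norm_eq_abs] using this
            calc |Qreg n (pt n i) - Qint n (pt n i)|
                ≤ |Qreg n (pt n i) - f (pt n i)| + |f (pt n i) - Qint n (pt n i)| := by
                  have := abs_sub_abs_le_abs_sub (Qreg n (pt n i)) (Qint n (pt n i))
                  exact abs_sub_le _ _ _
              _ ≤ D := add_le_add h2 h3
        _ = (∑ i : P n, |S n a i|) * D := by rw [Finset.sum_mul]
        _ ≤ Snorm n * D := by
            refine mul_le_mul_of_nonneg_right ?_ hD0
            rw [hSnorm n]
            exact le_ciSup (f := fun a : A n => ∑ i : P n, |S n a i|)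
              (Set.Finite.bddAbove (Set.finite_range _)) a
    -- norm bound on Qreg - Qint
    have hdiff : ‖Qreg n - Qint n‖ ≤ Λ n * (Snorm n * D) := by
      have hrepr : Qreg n - Qint n
          = ∑ a : A n, (Qreg n (node n a) - f (node n a)) • L n a := by
        conv_lhs => rw [← hproj n (Qreg n) (hQreg n), hQint n]
        rw [← Finset.sum_sub_distrib]
        exact Finset.sum_congr rfl fun a _ => by rw [sub_smul]
      refine (ContinuousMap.norm_le _ (mul_nonneg (hΛ0 n) (mul_nonneg (hS0 n) hD0))).2
        fun x => ?_
      rw [hrepr]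
      have : ‖(∑ a : A n, (Qreg n (node n a) - f (node n a)) • L n a) x‖
          = |∑ a : A n, (Qreg n (node n a) - f (node n a)) * L n a x| := by
        simp [ContinuousMap.sum_apply, Real.norm_eq_abs, smul_eq_mul]
      rw [this]
      calc |∑ a : A n, (Qreg n (node n a) - f (node n a)) * L n a x|
          ≤ ∑ a : A n, |Qreg n (node n a) - f (node n a)| * |L n a x| := by
            refine (Finset.abs_sum_le_sum_abs _ _).trans ?_
            exact le_of_eq (Finset.sum_congr rfl fun a _ => abs_mul _ _)
        _ ≤ ∑ a : A n, (Snorm n * D) * |L n a x| := by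
            refine Finset.sum_le_sum fun a _ => ?_
            exact mul_le_mul_of_nonneg_right (hcoef a) (abs_nonneg _)
        _ = (Snorm n * D) * ∑ a : A n, |L n a x| := by rw [Finset.mul_sum]
        _ ≤ (Snorm n * D) * Λ n := by
            refine mul_le_mul_of_nonneg_left ?_ (mul_nonneg (hS0 n) hD0)
            rw [hΛ n]
            have h4 : (∑ a : A n, |L n a|) x = ∑ a : A n, |L n a x| := by
              simp [ContinuousMap.sum_apply]
            calc ∑ a : A n, |L n a x| = (∑ a : A n, |L n a|) x := h4.symm
              _ ≤ |(∑ a : A n, |L n a|) x| := le_abs_self _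
              _ ≤ ‖∑ a : A n, |L n a|‖ := by
                  have := (∑ a : A n, |L n a|).norm_coe_le_norm x
                  simpa [Real.norm_eq_abs] using this
        _ = Λ n * (Snorm n * D) := mul_comm _ _
    -- combine
    have htri : ‖f - Qreg n‖ ≤ ‖f - Qint n‖ + ‖Qreg n - Qint n‖ := by
      have h := norm_sub_le_norm_sub_add_norm_sub f (Qint n) (Qreg n)
      rwa [norm_sub_rev (Qint n) (Qreg n)] at h
    have hfin : ‖f - Qreg n‖ ≤ ‖f - Qint n‖ + Λ n * (Snorm n * D) := by
      linarith [hdiff]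
    refine hfin.trans (le_of_eq ?_)
    rw [hD]; ring
  -- squeeze
  have hsum : Tendsto (fun n => ‖f - Qint n‖ * (1 + Λ n * Snorm n) + μ n * (Λ n * Snorm n))
      atTop (nhds 0) := by
    have := hint.add hreg
    simpa using this
  exact squeeze_zero (fun n => norm_nonneg _) hbound hsum
end

section
/- Unisolvence of the non-tensorial grids: if A ⊆ ℕ^m is downward closed and P_A = {p_α : α ∈ A} is the grid generated from distinct 1D nodes P_i (first essential assumption), then the evaluation map Π_A → ℝ^{|A|}, Q ↦ (Q(p_α))_{α∈A}, is a linear isomorphism; equivalently, no nonzero Q ∈ Π_A vanishes on all of P_A. -/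
open MvPolynomial

/-- Newton-type polynomial for exponent `α` with nodes `p`. -/
noncomputable def nwt (m : ℕ) (p : Fin m → ℕ → ℝ) (α : Fin m → ℕ) :
    MvPolynomial (Fin m) ℝ :=
  ∏ i, ∏ j ∈ Finset.range (α i), (X i - C (p i j))

lemma aux_degreeOf_prod_le {σ R ι : Type*} [CommRing R] (i : σ)
    (s : Finset ι) (f : ι → MvPolynomial σ R) :
    degreeOf i (∏ x ∈ s, f x) ≤ ∑ x ∈ s, degreeOf i (f x) := by
  classical
  induction s using Finset.cons_induction with
  | empty => simp [show degreeOf i (1 : MvPolynomial σ R) = 0 by rw [← C_1, degreeOf_C]]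
  | cons a s ha ih =>
      rw [Finset.prod_cons, Finset.sum_cons]
      exact le_trans (degreeOf_mul_le _ _ _) (add_le_add le_rfl ih)

lemma nwt_degreeOf (m : ℕ) (p : Fin m → ℕ → ℝ) (α : Fin m → ℕ) (i : Fin m) :
    degreeOf i (nwt m p α) ≤ α i := by
  classical
  refine le_trans (aux_degreeOf_prod_le i _ _) ?_
  have h1 : ∀ k : Fin m,
      degreeOf i (∏ j ∈ Finset.range (α k), (X k - C (p k j) : MvPolynomial (Fin m) ℝ))
        ≤ if i = k then α k else 0 := by
    intro k
    refine le_trans (aux_degreeOf_prod_le i _ _) ?_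
    have h2 : ∀ j, degreeOf i (X k - C (p k j) : MvPolynomial (Fin m) ℝ)
        ≤ if i = k then 1 else 0 := by
      intro j
      rw [degreeOf_le_iff]
      intro d hd
      have hsub := MvPolynomial.support_sub (Fin m) (X k) (C (p k j)) hd
      rcases Finset.mem_union.mp hsub with h | h
      · rw [MvPolynomial.support_X] at h
        rw [Finset.mem_singleton] at h
        subst h
        rw [Finsupp.single_apply]
        split_ifs with h1 h2 h3 <;> omega
      · have : d = 0 := by
          by_contra hne
          rw [MvPolynomial.mem_support_iff, MvPolynomial.coeff_C, if_neg (by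
            intro h0; exact hne h0.symm)] at h
          exact h rfl
        subst this
        simp
    refine le_trans (Finset.sum_le_sum fun j _ => h2 j) ?_
    rw [Finset.sum_const, Finset.card_range]
    split_ifs <;> simp
  refine le_trans (Finset.sum_le_sum fun k _ => h1 k) ?_
  simp

lemma nwt_support {m : ℕ} {p : Fin m → ℕ → ℝ} {α : Fin m → ℕ} {d : Fin m →₀ ℕ}
    (hd : d ∈ (nwt m p α).support) (i : Fin m) : d i ≤ α i :=
  le_trans (degreeOf_le_iff.mp le_rfl d hd) (nwt_degreeOf m p α i)

lemma nwt_eval (m : ℕ) (p : Fin m → ℕ → ℝ) (α : Fin m → ℕ) (x : Fin m → ℝ) :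
    eval x (nwt m p α) = ∏ i, ∏ j ∈ Finset.range (α i), (x i - p i j) := by
  simp [nwt]

lemma mem_span_monomial {m : ℕ} {s : Set (Fin m →₀ ℕ)} {Q : MvPolynomial (Fin m) ℝ}
    (h : ↑Q.support ⊆ s) :
    Q ∈ Submodule.span ℝ ((fun d => (monomial d (1 : ℝ))) '' s) := by
  rw [← Q.support_sum_monomial_coeff]
  refine Submodule.sum_mem _ fun d hd => ?_
  have hsm : (monomial d (Q.coeff d)) = (Q.coeff d) • monomial d (1 : ℝ) := by
    rw [MvPolynomial.smul_monomial, smul_eq_mul, mul_one]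
  rw [hsm]
  exact Submodule.smul_mem _ _ (Submodule.subset_span ⟨d, h hd, rfl⟩)

/-- unisolvence of the non-tensorial grids: for downward closed A
and distinct 1D nodes, the evaluation map Π_A → ℝ^{|A|}, Q ↦ (Q(p_α))_{α∈A}, is
a linear isomorphism; equivalently, no nonzero Q ∈ Π_A vanishes on all of P_A. -/
theorem stmt_18 (m : ℕ) (A : Finset (Fin m → ℕ))
    (hdc : ∀ α ∈ A, ∀ β : Fin m → ℕ, (∀ i, β i ≤ α i) → β ∈ A)
    (p : Fin m → ℕ → ℝ)
    (hdist : ∀ i, Set.InjOn (p i) (Set.Iic (A.sup fun α => α i)))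
    (PiA : Submodule ℝ (MvPolynomial (Fin m) ℝ))
    (hPiA : PiA = Submodule.span ℝ
      ((fun α : Fin m → ℕ =>
        (monomial (Finsupp.equivFunOnFinite.symm α) (1 : ℝ))) '' (A : Set (Fin m → ℕ)))) :
    IsLinearMap ℝ (fun Q : PiA => (fun a : A => eval (fun i => p i (a.1 i)) Q.1)) ∧
    Function.Bijective
      (fun Q : PiA => (fun a : A => eval (fun i => p i (a.1 i)) Q.1)) ∧
    (∀ Q ∈ PiA, (∀ a ∈ A, eval (fun i => p i (a i)) Q = 0) → Q = 0) := by
  classical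
  -- nonvanishing on the diagonal
  have hdiag : ∀ α ∈ A, eval (fun i => p i (α i)) (nwt m p α) ≠ 0 := by
    intro α hα
    rw [nwt_eval]
    refine Finset.prod_ne_zero_iff.mpr fun i _ => Finset.prod_ne_zero_iff.mpr fun j hj => ?_
    rw [Finset.mem_range] at hj
    intro h0
    have hsup : α i ≤ A.sup fun β => β i := Finset.le_sup (f := fun β => β i) hα
    have heq : α i = j :=
      hdist i (Set.mem_Iic.mpr hsup) (Set.mem_Iic.mpr (le_trans (le_of_lt hj) hsup))
        (sub_eq_zero.mp h0)
    exact lt_irrefl j (heq ▸ hj)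
  -- vanishing below the diagonal
  have hzero : ∀ α β : Fin m → ℕ, (∃ i, β i < α i) →
      eval (fun i => p i (β i)) (nwt m p α) = 0 := by
    rintro α β ⟨i, hi⟩
    rw [nwt_eval]
    apply Finset.prod_eq_zero (Finset.mem_univ i)
    apply Finset.prod_eq_zero (Finset.mem_range.mpr hi)
    simp
  -- membership of Newton polynomials in Π_A
  have hmem : ∀ α ∈ A, nwt m p α ∈ PiA := by
    intro α hα
    rw [hPiA]
    have himg : ((fun α : Fin m → ℕ =>
        (monomial (Finsupp.equivFunOnFinite.symm α) (1 : ℝ))) '' (A : Set (Fin m → ℕ)))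
        = (fun d => monomial d (1 : ℝ)) ''
          ((fun α : Fin m → ℕ => (Finsupp.equivFunOnFinite.symm α : Fin m →₀ ℕ)) ''
            (A : Set (Fin m → ℕ))) := by
      rw [Set.image_image]
    rw [himg]
    apply mem_span_monomial
    intro d hd
    refine ⟨Finsupp.equivFunOnFinite d, hdc α hα _ (fun i => nwt_support hd i), ?_⟩
    simp
  -- linearity
  have hlin : IsLinearMap ℝ (fun Q : PiA => (fun a : A => eval (fun i => p i (a.1 i)) Q.1)) := by
    constructor
    · intro Q R; funext a
      simp
    · intro c Q; funext a
      simp [MvPolynomial.smul_eval]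
  set E : PiA →ₗ[ℝ] (A → ℝ) := IsLinearMap.mk' _ hlin with hE
  have hbij : Function.Bijective E := by
    rcases isEmpty_or_nonempty A with hA | hA
    · -- A empty : everything trivial
      have hAe : A = ∅ := Finset.isEmpty_coe_sort.mp hA
      have hbot : PiA = ⊥ := by
        rw [hPiA, hAe]
        simp
      have hsub : Subsingleton PiA := by rw [hbot]; infer_instance
      constructor
      · intro x y _; exact Subsingleton.elim x y
      · intro y
        exact ⟨0, Subsingleton.elim _ _⟩
    · -- monomials give a basis of Π_A of cardinality |A|
      have humono : LinearIndependent ℝ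
          (fun a : A => (monomial (Finsupp.equivFunOnFinite.symm a.1) (1 : ℝ))) := by
        have h := (basisMonomials (Fin m) ℝ).linearIndependent
        rw [coe_basisMonomials] at h
        exact h.comp (fun a : A => Finsupp.equivFunOnFinite.symm a.1)
          (fun a b hab => Subtype.ext (Finsupp.equivFunOnFinite.symm.injective hab))
      have hspan : Submodule.span ℝ (Set.range
          (fun a : A => (monomial (Finsupp.equivFunOnFinite.symm a.1) (1 : ℝ)))) = PiA := by
        rw [hPiA]
        congr 1
        rw [show (fun a : A => (monomial (Finsupp.equivFunOnFinite.symm a.1) (1 : ℝ)))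
            = (fun α : Fin m → ℕ => (monomial (Finsupp.equivFunOnFinite.symm α) (1 : ℝ)))
              ∘ (Subtype.val) from rfl, Set.range_comp]
        congr 1
        ext x
        simp
      let b : Module.Basis A ℝ PiA := (Module.Basis.span humono).map (LinearEquiv.ofEq _ _ hspan)
      have hfd : FiniteDimensional ℝ PiA := Module.Finite.of_basis b
      have hfr : Module.finrank ℝ PiA = Module.finrank ℝ (A → ℝ) := by
        rw [Module.finrank_eq_card_basis b, Module.finrank_fintype_fun_eq_card]
      -- Newton family in Π_A
      let v : A → PiA := fun a => ⟨nwt m p a.1, hmem a.1 a.2⟩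
      have hw : LinearIndependent ℝ (⇑E ∘ v) := by
        rw [linearIndependent_iff']
        intro t g hsum a ha
        by_contra hg
        set t' := t.filter (fun i => g i ≠ 0) with ht'
        have hne : t'.Nonempty := ⟨a, Finset.mem_filter.mpr ⟨ha, hg⟩⟩
        obtain ⟨c, hct', hmin⟩ : ∃ c ∈ t', ∀ x ∈ t', ¬ x < c := by
          obtain ⟨c, hc⟩ := Finset.exists_minimal hne
          exact ⟨c, hc.1, fun x hx hlt => absurd (hc.2 hx hlt.le) (not_le_of_gt hlt)⟩
        have hct : c ∈ t := (Finset.mem_filter.mp hct').1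
        have hgc : g c ≠ 0 := (Finset.mem_filter.mp hct').2
        have h0 := congrFun hsum c
        rw [Finset.sum_apply] at h0
        have hterm : ∀ i ∈ t, i ≠ c → (g i • (⇑E ∘ v) i) c = 0 := by
          intro i hi hic
          by_cases hgi : g i = 0
          · simp [hgi]
          · have hit' : i ∈ t' := Finset.mem_filter.mpr ⟨hi, hgi⟩
            have hnle : ¬ (∀ k, i.1 k ≤ c.1 k) := by
              intro hle
              refine hmin i hit' ?_
              refine Subtype.coe_lt_coe.mp ?_
              exact lt_of_le_of_ne (fun k => hle k) (fun h => hic (Subtype.ext h))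
            push_neg at hnle
            obtain ⟨k, hk⟩ := hnle
            have hz := hzero i.1 c.1 ⟨k, by omega⟩
            show g i • (E (v i)) c = 0
            have : E (v i) c = eval (fun i' => p i' (c.1 i')) (nwt m p i.1) := rfl
            rw [this, hz, smul_zero]
          -- done
        have hsingle : ∑ i ∈ t, (g i • (⇑E ∘ v) i) c
            = (g c • (⇑E ∘ v) c) c := Finset.sum_eq_single c hterm (fun h => absurd hct h)
        rw [hsingle] at h0
        have hcc : (g c • (⇑E ∘ v) c) c = g c * eval (fun i => p i (c.1 i)) (nwt m p c.1) := rfl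
        rw [hcc] at h0
        exact hgc ((mul_eq_zero.mp h0).resolve_right (hdiag c.1 c.2))
      have hcard : Fintype.card A = Module.finrank ℝ (A → ℝ) := by
        rw [Module.finrank_fintype_fun_eq_card]
      let bw : Module.Basis A ℝ (A → ℝ) := basisOfLinearIndependentOfCardEqFinrank hw hcard
      have hsurj : Function.Surjective E := by
        rw [← LinearMap.range_eq_top]
        have h1 : Submodule.span ℝ (Set.range (⇑E ∘ v)) = ⊤ := by
          rw [← coe_basisOfLinearIndependentOfCardEqFinrank hw hcard]
          exact Module.Basis.span_eq _
        refine top_unique ?_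
        rw [← h1]
        refine Submodule.span_le.mpr ?_
        rintro _ ⟨x, rfl⟩
        exact ⟨v x, rfl⟩
      exact ⟨(LinearMap.injective_iff_surjective_of_finrank_eq_finrank hfr).mpr hsurj, hsurj⟩
  refine ⟨hlin, hbij, ?_⟩
  intro Q hQ hvan
  have hEQ : E ⟨Q, hQ⟩ = E 0 := by
    rw [map_zero]
    funext a
    exact hvan a.1 a.2
  have := hbij.injective hEQ
  simpa using congrArg Subtype.val this
end
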